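/- Error recursion bound: if the scheme truncation errors satisfy max_i |R_i^l| ≤ C₁(n^β + h²) for all l, and the errors e_i^l = y(x_i,t_l) - Y_i^l satisfy the perturbed scheme with e_i^0 = 0 and homogeneous boundary conditions, then for all 1 ≤ l ≤ n, ‖e^l‖_∞ ≤ C₁(n^β + h²) · Γ(2-α) / (τ_{l-1}^{-α} - ∑_{j=0}^{l-2}(τ_{j+1}^{-α} a_{j+1,l} - τ_j^{-α} a_{j,l})). -/

import Mathlib

noncomputable def gradedCoef (r α : ℝ) (j l : ℕ) : ℝ :=
  (((l : ℝ) ^ r - (j : ℝ) ^ r) / (((j : ℝ) + 1) ^ r - (j : ℝ) ^ r)) ^ (1 - α) -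
  (((l : ℝ) ^ r - ((j : ℝ) + 1) ^ r) / (((j : ℝ) + 1) ^ r - (j : ℝ) ^ r)) ^ (1 - α)

noncomputable def meshPt (r T : ℝ) (n i : ℕ) : ℝ := ((i : ℝ) / (n : ℝ)) ^ r * T

noncomputable def meshStep (r T : ℝ) (n i : ℕ) : ℝ := meshPt r T n (i + 1) - meshPt r T n i

/-- The operator `T₁` of the implicit scheme, applied at time level `l`. -/
noncomputable def T1op (α r T v D h : ℝ) (n : ℕ) (Y : ℕ → ℕ → ℝ) (i l : ℕ) : ℝ :=
  meshStep r T n (l - 1) ^ (-α) / Real.Gamma (2 - α) * Y i l +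
    v * (Y (i + 1) l - Y (i - 1) l) / (2 * h) -
    D * (Y (i + 1) l - 2 * Y i l + Y (i - 1) l) / h ^ 2

/-- The operator `T₂` of the implicit scheme, applied at time level `l - 1`. -/
noncomputable def T2op (α r T : ℝ) (n : ℕ) (Y : ℕ → ℕ → ℝ) (i l : ℕ) : ℝ :=
  meshStep r T n (l - 1) ^ (-α) / Real.Gamma (2 - α) * Y i (l - 1) -
    (1 / Real.Gamma (2 - α)) *
      ∑ j ∈ Finset.range (l - 1),
        meshStep r T n j ^ (-α) * gradedCoef r α j l * (Y i (j + 1) - Y i j)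

/-!
Write `w_{j,l} = τ_j^{-α} a_{j,l}` (`memoryWeight`) as the slope of the concave map `x ↦ x^{1-α}`
over `[t_l - t_{j+1}, t_l - t_j]`: hence `w_{j,l}` increases with `j` and `w_{0,l}` decreases with `l`.
Summation by parts (with `e^0 = 0`) turns `T₂e^{l-1}` into `∑_j (w_{j+1,l} - w_{j,l}) e^{j+1} / Γ(2-α)`,
a combination of earlier errors with nonnegative weights, and the denominator of the bound telescopes
to `w_{0,l}`. Since `h < 2D/v`, the off-diagonal coefficients of `T₁` are nonpositive and its diagonal
exceeds their total by `τ_{l-1}^{-α}/Γ(2-α)`, so a discrete maximum principle at a node where `|e^l|` is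
largest propagates the bound `C₁(n^β + h²) Γ(2-α) / w_{0,l}` by induction on `l`.
-/

theorem ConcaveOn.slope_le_slope_of_le {𝕜 : Type*} [Field 𝕜] [LinearOrder 𝕜]
    [IsStrictOrderedRing 𝕜] {s : Set 𝕜} {f : 𝕜 → 𝕜} (hf : ConcaveOn 𝕜 s f) {a b a' b' : 𝕜}
    (ha : a ∈ s) (hb : b ∈ s) (ha' : a' ∈ s) (hb' : b' ∈ s) (hab : a < b) (hab' : a' < b')
    (haa' : a ≤ a') (hbb' : b ≤ b') :
    slope f a' b' ≤ slope f a b :=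
  calc slope f a' b' = slope f b' a' := slope_comm f a' b'
    _ ≤ slope f b' a := hf.slope_anti hb' ⟨ha, by simp; linarith⟩ ⟨ha', hab'.ne⟩ haa'
    _ = slope f a b' := slope_comm f b' a
    _ ≤ slope f a b := hf.slope_anti ha ⟨hb, hab.ne'⟩ ⟨hb', by simp; linarith⟩ hbb'

theorem sum_range_mul_sub_by_parts {R : Type*} [CommRing R] (c E : ℕ → R) (m : ℕ) :
    ∑ j ∈ Finset.range m, c j * (E (j + 1) - E j) =
      c m * E m - c 0 * E 0 - ∑ j ∈ Finset.range m, (c (j + 1) - c j) * E (j + 1) := by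
  induction m with
  | zero => simp
  | succ m ih => rw [Finset.sum_range_succ, ih, Finset.sum_range_succ]; ring

theorem mul_abs_le_abs_three_point {A P Q x y z : ℝ} (hA : 0 ≤ A) (hP : 0 ≤ P) (hQ : 0 ≤ Q)
    (hy : |y| ≤ |x|) (hz : |z| ≤ |x|) :
    A * |x| ≤ |(A + P + Q) * x - P * y - Q * z| := by
  have htri : |(A + P + Q) * x| ≤ |(A + P + Q) * x - P * y - Q * z| + |P * y| + |Q * z| := by
    calc |(A + P + Q) * x| = |((A + P + Q) * x - P * y - Q * z) + P * y + Q * z| := by ring_nf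
      _ ≤ _ := abs_add_three _ _ _
  rw [abs_mul, abs_mul, abs_mul, abs_of_nonneg (by positivity : 0 ≤ A + P + Q),
    abs_of_nonneg hP, abs_of_nonneg hQ] at htri
  linarith [mul_le_mul_of_nonneg_left hy hP, mul_le_mul_of_nonneg_left hz hQ]

theorem discrete_maximum_principle {A P Q B : ℝ} (hA : 0 ≤ A) (hP : 0 ≤ P) (hQ : 0 ≤ Q)
    (hB : 0 ≤ B) {u : ℕ → ℝ} {K : ℕ} (h0 : u 0 = 0) (hK : u K = 0)
    (hu : ∀ i, 1 ≤ i → i ≤ K - 1 → |(A + P + Q) * u i - P * u (i + 1) - Q * u (i - 1)| ≤ B) :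
    ∀ i ≤ K, A * |u i| ≤ B := by
  obtain ⟨i₀, hi₀, hmax⟩ := Finset.exists_max_image (Finset.range (K + 1)) (fun i => |u i|)
    ⟨0, by simp⟩
  have hi₀K : i₀ ≤ K := Nat.lt_succ_iff.1 (Finset.mem_range.1 hi₀)
  have hle : ∀ i ≤ K, |u i| ≤ |u i₀| := fun i hi => hmax i (Finset.mem_range.2 (by omega))
  suffices A * |u i₀| ≤ B from fun i hi => (mul_le_mul_of_nonneg_left (hle i hi) hA).trans this
  rcases Nat.eq_zero_or_pos i₀ with rfl | hpos
  · simpa [h0] using hB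
  rcases eq_or_lt_of_le hi₀K with rfl | hlt
  · simpa [hK] using hB
  exact (mul_abs_le_abs_three_point hA hP hQ (hle _ (by omega)) (hle _ (by omega))).trans
    (hu i₀ hpos (by omega))

noncomputable def memoryWeight (α r T : ℝ) (n j l : ℕ) : ℝ :=
  meshStep r T n j ^ (-α) * gradedCoef r α j l

theorem meshStep_rpow_neg_mul_gradedCoef (α r T : ℝ) (n j l : ℕ) :
    meshStep r T n j ^ (-α) * gradedCoef r α j l = memoryWeight α r T n j l :=
  rfl

section GradedMesh

variable {α r T : ℝ} {n : ℕ}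

theorem meshPt_eq (r T : ℝ) (n i : ℕ) : meshPt r T n i = (i : ℝ) ^ r * (T / (n : ℝ) ^ r) := by
  rw [meshPt, Real.div_rpow (Nat.cast_nonneg i) (Nat.cast_nonneg n), mul_div_assoc']
  ring

theorem meshPt_strictMono (hr : 0 < r) (hT : 0 < T) (hn : 0 < n) : StrictMono (meshPt r T n) := by
  intro i k hik
  simp only [meshPt_eq]
  have hc : 0 < T / (n : ℝ) ^ r := div_pos hT (Real.rpow_pos_of_pos (Nat.cast_pos.2 hn) r)
  exact mul_lt_mul_of_pos_right
    (Real.rpow_lt_rpow (Nat.cast_nonneg i) (Nat.cast_lt.2 hik) hr) hc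

theorem meshStep_pos (hr : 0 < r) (hT : 0 < T) (hn : 0 < n) (j : ℕ) : 0 < meshStep r T n j :=
  sub_pos.2 (meshPt_strictMono hr hT hn (Nat.lt_succ_self j))

theorem gradedCoef_eq_meshPt (hT : T ≠ 0) (hn : 0 < n) (j l : ℕ) :
    gradedCoef r α j l =
      ((meshPt r T n l - meshPt r T n j) / meshStep r T n j) ^ (1 - α) -
        ((meshPt r T n l - meshPt r T n (j + 1)) / meshStep r T n j) ^ (1 - α) := by
  have hc : T / (n : ℝ) ^ r ≠ 0 := div_ne_zero hT (Real.rpow_pos_of_pos (Nat.cast_pos.2 hn) r).ne'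
  simp only [meshStep, meshPt_eq, ← sub_mul, mul_div_mul_right _ _ hc, gradedCoef]
  push_cast
  rfl

theorem memoryWeight_eq_slope (hr : 0 < r) (hT : 0 < T) (hn : 0 < n) {j l : ℕ}
    (hjl : j + 1 ≤ l) :
    memoryWeight α r T n j l = slope (fun x : ℝ => x ^ (1 - α))
      (meshPt r T n l - meshPt r T n (j + 1)) (meshPt r T n l - meshPt r T n j) := by
  have hmono := (meshPt_strictMono hr hT hn).monotone
  have hτ := meshStep_pos hr hT hn j
  rw [memoryWeight, gradedCoef_eq_meshPt hT.ne' hn, slope_def_field,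
    Real.div_rpow (sub_nonneg.2 (hmono (by omega))) hτ.le,
    Real.div_rpow (sub_nonneg.2 (hmono hjl)) hτ.le,
    show meshPt r T n l - meshPt r T n j - (meshPt r T n l - meshPt r T n (j + 1)) =
      meshStep r T n j by rw [meshStep]; ring,
    sub_eq_add_neg (1 : ℝ) α, Real.rpow_add hτ, Real.rpow_one]
  field_simp

theorem memoryWeight_le_succ (hα0 : 0 ≤ α) (hα1 : α ≤ 1) (hr : 0 < r) (hT : 0 < T) (hn : 0 < n)
    {j l : ℕ} (hjl : j + 2 ≤ l) :
    memoryWeight α r T n j l ≤ memoryWeight α r T n (j + 1) l := by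
  have hmono := (meshPt_strictMono hr hT hn).monotone
  have hstrict := meshPt_strictMono hr hT hn
  rw [memoryWeight_eq_slope hr hT hn (by omega), memoryWeight_eq_slope hr hT hn (by omega)]
  have hφ : ConcaveOn ℝ (Set.Ici 0) (fun x : ℝ => x ^ (1 - α)) :=
    Real.concaveOn_rpow (by linarith) (by linarith)
  refine hφ.slope_le_slope_of_le ?_ ?_ ?_ ?_ ?_ ?_ ?_ ?_ <;>
    simp only [Set.mem_Ici, sub_nonneg, sub_lt_sub_iff_left, sub_le_sub_iff_left] <;>
    first | exact hmono (by omega) | exact hstrict (by omega)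

theorem memoryWeight_zero_anti (hα0 : 0 ≤ α) (hα1 : α ≤ 1) (hr : 0 < r) (hT : 0 < T)
    (hn : 0 < n) {m l : ℕ} (hm : 1 ≤ m) (hml : m ≤ l) :
    memoryWeight α r T n 0 l ≤ memoryWeight α r T n 0 m := by
  have hmono := (meshPt_strictMono hr hT hn).monotone
  have hstrict := meshPt_strictMono hr hT hn
  rw [memoryWeight_eq_slope hr hT hn (by omega), memoryWeight_eq_slope hr hT hn (by omega)]
  have hφ : ConcaveOn ℝ (Set.Ici 0) (fun x : ℝ => x ^ (1 - α)) :=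
    Real.concaveOn_rpow (by linarith) (by linarith)
  refine hφ.slope_le_slope_of_le ?_ ?_ ?_ ?_ ?_ ?_ ?_ ?_ <;>
    simp only [Set.mem_Ici, sub_nonneg, sub_lt_sub_iff_left, sub_le_sub_iff_right] <;>
    first | exact hmono (by omega) | exact hstrict (by omega)

theorem memoryWeight_zero_pos (hα1 : α < 1) (hr : 0 < r) (hT : 0 < T) (hn : 0 < n) {l : ℕ}
    (hl : 1 ≤ l) : 0 < memoryWeight α r T n 0 l := by
  have hmono := (meshPt_strictMono hr hT hn).monotone
  have hstrict := meshPt_strictMono hr hT hn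
  rw [memoryWeight_eq_slope hr hT hn hl, zero_add,
    slope_pos_iff_of_le (sub_le_sub_left (hmono zero_le_one) _)]
  exact Real.rpow_lt_rpow (sub_nonneg.2 (hmono hl)) (sub_lt_sub_left (hstrict zero_lt_one) _)
    (by linarith)

theorem memoryWeight_last (hα1 : α < 1) (hr : 0 < r) (hT : 0 < T) (hn : 0 < n) {l : ℕ}
    (hl : 1 ≤ l) : memoryWeight α r T n (l - 1) l = meshStep r T n (l - 1) ^ (-α) := by
  obtain ⟨k, rfl⟩ : ∃ k, l = k + 1 := ⟨l - 1, by omega⟩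
  rw [Nat.add_sub_cancel, memoryWeight, gradedCoef_eq_meshPt hT.ne' hn, sub_self, zero_div,
    ← meshStep, div_self (meshStep_pos hr hT hn k).ne', Real.one_rpow,
    Real.zero_rpow (by linarith), sub_zero, mul_one]

theorem T2op_eq_sum (hα1 : α < 1) (hr : 0 < r) (hT : 0 < T) (hn : 0 < n) {l : ℕ} (hl : 1 ≤ l)
    {Y : ℕ → ℕ → ℝ} {i : ℕ} (h0 : Y i 0 = 0) :
    T2op α r T n Y i l = (∑ j ∈ Finset.range (l - 1),
      (memoryWeight α r T n (j + 1) l - memoryWeight α r T n j l) * Y i (j + 1)) /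
        Real.Gamma (2 - α) := by
  rw [T2op, ← memoryWeight_last hα1 hr hT hn hl]
  simp only [meshStep_rpow_neg_mul_gradedCoef]
  rw [sum_range_mul_sub_by_parts, h0]
  ring

theorem abs_T2op_le (hα0 : 0 ≤ α) (hα1 : α < 1) (hr : 0 < r) (hT : 0 < T) (hn : 0 < n)
    {l : ℕ} (hl : 1 ≤ l) {Y : ℕ → ℕ → ℝ} {i : ℕ} (h0 : Y i 0 = 0) {M : ℝ}
    (hM : ∀ m, 1 ≤ m → m < l → |Y i m| ≤ M) :
    |T2op α r T n Y i l| ≤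
      (memoryWeight α r T n (l - 1) l - memoryWeight α r T n 0 l) * M / Real.Gamma (2 - α) := by
  have hΓ : 0 < Real.Gamma (2 - α) := Real.Gamma_pos_of_pos (by linarith)
  rw [T2op_eq_sum hα1 hr hT hn hl h0, abs_div, abs_of_pos hΓ,
    ← Finset.sum_range_sub (fun j => memoryWeight α r T n j l), Finset.sum_mul]
  gcongr
  refine (Finset.abs_sum_le_sum_abs _ _).trans (Finset.sum_le_sum fun j hj => ?_)
  have hj : j + 2 ≤ l := by have := Finset.mem_range.1 hj; omega
  have hw := sub_nonneg.2 (memoryWeight_le_succ hα0 hα1.le hr hT hn hj)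
  rw [abs_mul, abs_of_nonneg hw]
  exact mul_le_mul_of_nonneg_left (hM _ (by omega) (by omega)) hw

end GradedMesh

theorem T1op_eq_three_point {α r T v D h : ℝ} {n : ℕ} (hh : h ≠ 0) (Y : ℕ → ℕ → ℝ) (i l : ℕ) :
    T1op α r T v D h n Y i l =
      (meshStep r T n (l - 1) ^ (-α) / Real.Gamma (2 - α) + (D / h ^ 2 - v / (2 * h)) +
          (D / h ^ 2 + v / (2 * h))) * Y i l -
        (D / h ^ 2 - v / (2 * h)) * Y (i + 1) l - (D / h ^ 2 + v / (2 * h)) * Y (i - 1) l := by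
  rw [T1op]
  field_simp
  ring

theorem three_point_coefs_nonneg {v D h : ℝ} (hh : 0 < h) (hmesh : |v| * h ≤ 2 * D) :
    0 ≤ D / h ^ 2 - v / (2 * h) ∧ 0 ≤ D / h ^ 2 + v / (2 * h) := by
  have hform : ∀ w : ℝ, D / h ^ 2 + w / (2 * h) = (2 * D + w * h) / (2 * h ^ 2) := fun w => by
    field_simp
  have hvh : |v * h| ≤ 2 * D := by rwa [abs_mul, abs_of_pos hh]
  rw [abs_le] at hvh
  rw [sub_eq_add_neg, ← neg_div, hform, hform]
  constructor <;> apply div_nonneg <;> nlinarith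

theorem abs_error_le_div_memoryWeight {α r T v D h : ℝ} {n K : ℕ} (hα0 : 0 ≤ α) (hα1 : α < 1)
    (hr : 0 < r) (hT : 0 < T) (hn : 0 < n) (hh : 0 < h) (hmesh : |v| * h ≤ 2 * D)
    {e R : ℕ → ℕ → ℝ} {ε : ℝ} (hε : 0 ≤ ε)
    (hR : ∀ l, 1 ≤ l → l ≤ n → ∀ i, 1 ≤ i → i ≤ K - 1 → |R i l| ≤ ε)
    (hinit : ∀ i, e i 0 = 0)
    (hbc : ∀ l, l ≤ n → e 0 l = 0 ∧ e K l = 0)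
    (hrec : ∀ l, 1 ≤ l → l ≤ n → ∀ i, 1 ≤ i → i ≤ K - 1 →
      T1op α r T v D h n e i l = T2op α r T n e i l + R i l) :
    ∀ l, 1 ≤ l → l ≤ n → ∀ i ≤ K,
      |e i l| ≤ ε * Real.Gamma (2 - α) / memoryWeight α r T n 0 l := by
  intro l
  induction l using Nat.strong_induction_on with
  | _ l IH =>
  intro hl hln
  have hΓ : 0 < Real.Gamma (2 - α) := Real.Gamma_pos_of_pos (by linarith)
  have hw₀ := memoryWeight_zero_pos hα1 hr hT hn hl
  set M := ε * Real.Gamma (2 - α) / memoryWeight α r T n 0 l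
  set A := meshStep r T n (l - 1) ^ (-α) / Real.Gamma (2 - α)
  have hA : 0 < A := div_pos (Real.rpow_pos_of_pos (meshStep_pos hr hT hn _) _) hΓ
  have hprev : ∀ i ≤ K, ∀ m, 1 ≤ m → m < l → |e i m| ≤ M := fun i hi m hm hml =>
    (IH m hml hm (by omega) i hi).trans (div_le_div_of_nonneg_left (by positivity) hw₀
      (memoryWeight_zero_anti hα0 hα1.le hr hT hn hm hml.le))
  have hAM : A * M =
      (memoryWeight α r T n (l - 1) l - memoryWeight α r T n 0 l) * M / Real.Gamma (2 - α) + ε := by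
    rw [memoryWeight_last hα1 hr hT hn hl]
    simp only [A, M]
    field_simp
    ring
  obtain ⟨hP, hQ⟩ := three_point_coefs_nonneg hh hmesh
  have hmax := discrete_maximum_principle (u := fun i => e i l) hA.le hP hQ
    (hAM ▸ mul_nonneg hA.le (by positivity)) (hbc l hln).1 (hbc l hln).2 fun i hi hiK => by
      rw [← T1op_eq_three_point hh.ne', hrec l hl hln i hi hiK]
      exact (abs_add_le _ _).trans (add_le_add
        (abs_T2op_le hα0 hα1 hr hT hn hl (hinit i) (hprev i (by omega))) (hR l hl hln i hi hiK))
  exact fun i hi => le_of_mul_le_mul_left ((hmax i hi).trans_eq hAM.symm) hA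

theorem error_recursion_bound_general (α r T v D L : ℝ) (hα0 : 0 < α) (hα1 : α < 1)
    (hr : 1 ≤ r) (hT : 0 < T) (hv : 0 < v) (hL : 0 < L)
    (n K : ℕ) (hn : 1 ≤ n) (hK : 2 ≤ K) (h : ℝ) (hh : h = L / K)
    (hmesh : h < 2 * D / v)
    (β : ℝ)
    (e R : ℕ → ℕ → ℝ) (C₁ : ℝ) (hC₁ : 0 < C₁)
    (hR : ∀ l, 1 ≤ l → l ≤ n → ∀ i, 1 ≤ i → i ≤ K - 1 →
      |R i l| ≤ C₁ * ((n : ℝ) ^ β + h ^ 2))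
    (hinit : ∀ i, e i 0 = 0)
    (hbc : ∀ l, l ≤ n → e 0 l = 0 ∧ e K l = 0)
    (hrec : ∀ l, 1 ≤ l → l ≤ n → ∀ i, 1 ≤ i → i ≤ K - 1 →
      T1op α r T v D h n e i l = T2op α r T n e i l + R i l) :
    ∀ l, 1 ≤ l → l ≤ n → ∀ i, 1 ≤ i → i ≤ K - 1 →
      |e i l| ≤ C₁ * ((n : ℝ) ^ β + h ^ 2) * Real.Gamma (2 - α) /
        (meshStep r T n (l - 1) ^ (-α) -
          ∑ j ∈ Finset.range (l - 1),
            (meshStep r T n (j + 1) ^ (-α) * gradedCoef r α (j + 1) l -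
              meshStep r T n j ^ (-α) * gradedCoef r α j l)) := by
  intro l hl hln i hi hiK
  have hr0 : 0 < r := by linarith
  have hh0 : 0 < h := hh ▸ div_pos hL (by exact_mod_cast (by omega : 0 < K))
  have hmesh' : |v| * h ≤ 2 * D := by
    rw [abs_of_pos hv, mul_comm]
    exact ((lt_div_iff₀ hv).1 hmesh).le
  rw [← memoryWeight_last hα1 hr0 hT hn hl]
  simp only [meshStep_rpow_neg_mul_gradedCoef]
  rw [Finset.sum_range_sub (fun j => memoryWeight α r T n j l), sub_sub_cancel]
  exact abs_error_le_div_memoryWeight hα0.le hα1 hr0 hT hn hh0 hmesh' (by positivity) hR hinit hbc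
    hrec l hl hln i (by omega)

theorem error_recursion_bound (α r T v D L : ℝ) (hα0 : 0 < α) (hα1 : α < 1)
    (hr : 1 ≤ r) (hT : 0 < T) (hv : 0 < v) (hD : 0 < D) (hL : 0 < L)
    (n K : ℕ) (hn : 1 ≤ n) (hK : 2 ≤ K) (h : ℝ) (hh : h = L / K)
    (hmesh : h < 2 * D / v)
    (β : ℝ) (hβ : β = -min (2 - α) (r * α))
    (e R : ℕ → ℕ → ℝ) (C₁ : ℝ) (hC₁ : 0 < C₁)
    (hR : ∀ l, 1 ≤ l → l ≤ n → ∀ i, 1 ≤ i → i ≤ K - 1 →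
      |R i l| ≤ C₁ * ((n : ℝ) ^ β + h ^ 2))
    (hinit : ∀ i, e i 0 = 0)
    (hbc : ∀ l, l ≤ n → e 0 l = 0 ∧ e K l = 0)
    (hrec : ∀ l, 1 ≤ l → l ≤ n → ∀ i, 1 ≤ i → i ≤ K - 1 →
      T1op α r T v D h n e i l = T2op α r T n e i l + R i l) :
    ∀ l, 1 ≤ l → l ≤ n → ∀ i, 1 ≤ i → i ≤ K - 1 →
      |e i l| ≤ C₁ * ((n : ℝ) ^ β + h ^ 2) * Real.Gamma (2 - α) /
        (meshStep r T n (l - 1) ^ (-α) -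
          ∑ j ∈ Finset.range (l - 1),
            (meshStep r T n (j + 1) ^ (-α) * gradedCoef r α (j + 1) l -
              meshStep r T n j ^ (-α) * gradedCoef r α j l)) :=
  error_recursion_bound_general α r T v D L hα0 hα1 hr hT hv hL n K hn hK h hh hmesh β e R C₁ hC₁ hR
    hinit hbc hrec
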